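/- The exponential generating function of the polynomials I_n is ∑_{n=0}^∞ (t^n/n!)·I_n = exp(α·t² + t·I_1), where I_1 = νw - 2αz - ξ; that is, for every complex t the series converges and equals exp(αt² + t(νw - 2αz - ξ)). -/

import Mathlib

open Complex

noncomputable def Ic (ν α ξ z w : ℂ) : ℕ → ℂ
  | 0 => 1
  | 1 => ν * w - 2 * α * z - ξ
  | (n + 2) => (ν * w - 2 * α * z - ξ) * Ic ν α ξ z w (n + 1)
      + 2 * α * (n + 1) * Ic ν α ξ z w n

/-!
Multiplying the exponential series of `α t²` and of `b t`, with `b = ν w - 2 α z - ξ`, and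
grouping the terms by the power of `t`, the coefficient of `tⁿ` in `exp (α t² + b t)` is
`cₙ = ∑_{2j + m = n} αʲ / j! · bᵐ / m!`. Writing `n + 2 = 2j + m` inside this sum and shifting
`m` or `j` down by one gives `(n + 2) cₙ₊₂ = b cₙ₊₁ + 2α cₙ`, which is the recurrence of
`Iₙ / n!`; hence `Iₙ = n! cₙ`.
-/

open Finset Nat

def weightedAntidiagonal (n : ℕ) : Finset (ℕ × ℕ) :=
  (range (n + 1) ×ˢ range (n + 1)).filter fun p => 2 * p.1 + p.2 = n

@[simp]
lemma mem_weightedAntidiagonal {n : ℕ} {p : ℕ × ℕ} :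
    p ∈ weightedAntidiagonal n ↔ 2 * p.1 + p.2 = n := by
  simp only [weightedAntidiagonal, mem_filter, mem_product, mem_range, and_iff_right_iff_imp]
  omega

@[simp]
lemma weightedAntidiagonal_zero : weightedAntidiagonal 0 = {(0, 0)} := by decide

@[simp]
lemma weightedAntidiagonal_one : weightedAntidiagonal 1 = {(0, 1)} := by decide

section Reindex

variable {M : Type*} [AddCommMonoid M]

lemma sum_weightedAntidiagonal_succ {f : ℕ → ℕ → M} (hf : ∀ j, f j 0 = 0) (n : ℕ) :
    ∑ p ∈ weightedAntidiagonal (n + 1), f p.1 p.2 =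
      ∑ p ∈ weightedAntidiagonal n, f p.1 (p.2 + 1) := by
  let e : ℕ × ℕ ↪ ℕ × ℕ :=
    ⟨fun p => (p.1, p.2 + 1), fun p q h => by simpa [Prod.ext_iff] using h⟩
  calc ∑ p ∈ weightedAntidiagonal (n + 1), f p.1 p.2
      = ∑ p ∈ (weightedAntidiagonal n).map e, f p.1 p.2 := by
        refine (sum_subset (fun p hp => ?_) fun p hp hpe => ?_).symm
        · obtain ⟨q, hq, rfl⟩ := mem_map.1 hp
          rw [mem_weightedAntidiagonal] at hq ⊢
          change 2 * q.1 + (q.2 + 1) = n + 1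
          omega
        · obtain ⟨j, _ | m⟩ := p
          · exact hf j
          · refine absurd (mem_map.2 ⟨(j, m), ?_, rfl⟩) hpe
            rw [mem_weightedAntidiagonal] at hp ⊢
            omega
    _ = _ := sum_map _ e _

lemma sum_weightedAntidiagonal_add_two {f : ℕ → ℕ → M} (hf : ∀ m, f 0 m = 0) (n : ℕ) :
    ∑ p ∈ weightedAntidiagonal (n + 2), f p.1 p.2 =
      ∑ p ∈ weightedAntidiagonal n, f (p.1 + 1) p.2 := by
  let e : ℕ × ℕ ↪ ℕ × ℕ :=
    ⟨fun p => (p.1 + 1, p.2), fun p q h => by simpa [Prod.ext_iff] using h⟩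
  calc ∑ p ∈ weightedAntidiagonal (n + 2), f p.1 p.2
      = ∑ p ∈ (weightedAntidiagonal n).map e, f p.1 p.2 := by
        refine (sum_subset (fun p hp => ?_) fun p hp hpe => ?_).symm
        · obtain ⟨q, hq, rfl⟩ := mem_map.1 hp
          rw [mem_weightedAntidiagonal] at hq ⊢
          change 2 * (q.1 + 1) + q.2 = n + 2
          omega
        · obtain ⟨_ | j, m⟩ := p
          · exact hf m
          · refine absurd (mem_map.2 ⟨(j, m), ?_, rfl⟩) hpe
            rw [mem_weightedAntidiagonal] at hp ⊢
            omega
    _ = _ := sum_map _ e _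

end Reindex

section Coeff

variable {K : Type*} [Field K]

def expQuadCoeff (a b : K) (n : ℕ) : K :=
  ∑ p ∈ weightedAntidiagonal n, a ^ p.1 / p.1 ! * (b ^ p.2 / p.2 !)

lemma pow_mul_expQuadCoeff (a b t : K) (n : ℕ) :
    t ^ n * expQuadCoeff a b n = expQuadCoeff (a * t ^ 2) (b * t) n := by
  rw [expQuadCoeff, expQuadCoeff, mul_sum]
  refine sum_congr rfl fun p hp => ?_
  rw [← mem_weightedAntidiagonal.1 hp, pow_add, pow_mul, mul_pow, mul_pow]
  ring

lemma succ_mul_pow_div_factorial [CharZero K] (x : K) (m : ℕ) :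
    (m + 1 : K) * (x ^ (m + 1) / (m + 1)!) = x * (x ^ m / m !) := by
  rw [factorial_succ]
  push_cast
  field_simp
  ring

lemma add_two_mul_expQuadCoeff [CharZero K] (a b : K) (n : ℕ) :
    (n + 2 : K) * expQuadCoeff a b (n + 2) =
      b * expQuadCoeff a b (n + 1) + 2 * a * expQuadCoeff a b n := by
  let T : ℕ → ℕ → K := fun j m => a ^ j / j ! * (b ^ m / m !)
  calc (n + 2 : K) * expQuadCoeff a b (n + 2)
      = ∑ p ∈ weightedAntidiagonal (n + 2), (p.2 * T p.1 p.2 + 2 * (p.1 * T p.1 p.2)) := by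
        rw [expQuadCoeff, mul_sum]
        refine sum_congr rfl fun p hp => ?_
        have hn : (n + 2 : K) = 2 * p.1 + p.2 := by
          exact_mod_cast (mem_weightedAntidiagonal.1 hp).symm
        rw [hn]
        ring
    _ = ∑ p ∈ weightedAntidiagonal (n + 1), (p.2 + 1 : ℕ) * T p.1 (p.2 + 1) +
          2 * ∑ p ∈ weightedAntidiagonal n, (p.1 + 1 : ℕ) * T (p.1 + 1) p.2 := by
        rw [sum_add_distrib, ← mul_sum,
          sum_weightedAntidiagonal_succ (f := fun j m => (m : K) * T j m) (by simp),
          sum_weightedAntidiagonal_add_two (f := fun j m => (j : K) * T j m) (by simp)]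
    _ = b * expQuadCoeff a b (n + 1) + 2 * a * expQuadCoeff a b n := by
        simp only [T, expQuadCoeff, mul_sum, cast_succ, mul_assoc]
        congr 1 <;> refine sum_congr rfl fun p _ => ?_
        · linear_combination a ^ p.1 / p.1 ! * succ_mul_pow_div_factorial b p.2
        · linear_combination 2 * (b ^ p.2 / p.2 !) * succ_mul_pow_div_factorial a p.1

end Coeff

lemma Ic_eq_factorial_mul_expQuadCoeff (ν α ξ z w : ℂ) (n : ℕ) :
    Ic ν α ξ z w n = n ! * expQuadCoeff α (ν * w - 2 * α * z - ξ) n := by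
  induction n using Nat.twoStepInduction with
  | zero => simp [Ic, expQuadCoeff]
  | one => simp [Ic, expQuadCoeff]
  | more n ih₀ ih₁ =>
    rw [Ic, ih₀, ih₁, factorial_succ (n + 1), factorial_succ n]
    push_cast
    linear_combination
      (-(n + 1) * n ! : ℂ) * add_two_mul_expQuadCoeff α (ν * w - 2 * α * z - ξ) n

lemma hasSum_expQuadCoeff {𝕂 : Type*} [RCLike 𝕂] (a b : 𝕂) :
    HasSum (expQuadCoeff a b) (NormedSpace.exp a * NormedSpace.exp b) := by
  have ha := NormedSpace.expSeries_div_hasSum_exp a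
  have hb := NormedSpace.expSeries_div_hasSum_exp b
  have hab := summable_mul_of_summable_norm
    (NormedSpace.norm_expSeries_div_summable a) (NormedSpace.norm_expSeries_div_summable b)
  refine ((ha.mul hb hab).tsum_fiberwise fun p => 2 * p.1 + p.2).congr_fun fun n => ?_
  have hfiber : (fun p : ℕ × ℕ => 2 * p.1 + p.2) ⁻¹' {n} = weightedAntidiagonal n := by
    ext; simp
  rw [hfiber]
  exact (Finset.tsum_subtype' _ _).symm

theorem stmt4 (ν α ξ z w t : ℂ) :
    HasSum (fun n : ℕ => t ^ n / (n.factorial : ℂ) * Ic ν α ξ z w n)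
      (Complex.exp (α * t ^ 2 + t * (ν * w - 2 * α * z - ξ))) := by
  have hterm : ∀ n, t ^ n / n ! * Ic ν α ξ z w n =
      expQuadCoeff (α * t ^ 2) ((ν * w - 2 * α * z - ξ) * t) n := fun n => by
    rw [Ic_eq_factorial_mul_expQuadCoeff, ← pow_mul_expQuadCoeff]
    field_simp [factorial_ne_zero]
  rw [funext hterm, exp_add, mul_comm t, exp_eq_exp_ℂ]
  exact hasSum_expQuadCoeff _ _
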